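/- Suppose the set S = {(p₁,p₂,p₃) ∈ (L_R*)³ : p₁ = p₂ + p₃ and |p₁| ≠ |p₂| + |p₃|} is nonempty, let Λ_* = min_{(p₁,p₂,p₃)∈S} ||p₁| − |p₂| − |p₃||, and let 0 ≤ Λ < Λ_*. Let f : [0, ∞) → (0, ∞)^{L_R*} be a solution of the discrete near-resonance acoustic kinetic system with broadening Λ, with strictly positive values. Then there exists an equilibrium f* ∈ (0, ∞)^{L_R*} (i.e., Q^{NR}_p[f*] = 0 for all p ∈ L_R*) such that for every p ∈ L_R*, writing p = kP where P is the nonzero point of ℤ³ of minimal Euclidean norm on the ray {sp : s > 0} and k is a positive integer, one has f*_p = 1/(k·ρ(P)) for a constant ρ(P) > 0 depending only on P; moreover there exist constants C₁, C₂ > 0 such that max_{p∈L_R*} |f_p(t) − f*_p| ≤ C₁·e^{−C₂ t} for all t ≥ 0. -/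

import Mathlib

open scoped BigOperators Classical

/-- Euclidean norm of a point of the integer lattice `ℤ³`. -/
noncomputable def enorm3 (p : Fin 3 → ℤ) : ℝ := Real.sqrt (∑ i, ((p i : ℝ))^2)

/-- The truncated lattice `L_R* = {p ∈ ℤ³ : 0 < |p| < R}` (as a finite set). -/
noncomputable def latticeBall (R : ℝ) : Finset (Fin 3 → ℤ) :=
  (Finset.Icc (fun _ => (-⌈R⌉ : ℤ)) (fun _ => (⌈R⌉ : ℤ))).filter
    (fun p => 0 < enorm3 p ∧ enorm3 p < R)

/-- Right-hand side of the discrete exact-resonance acoustic wave kinetic system, with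
kernel `V_{p₁,p₂,p₃} = |p₁||p₂||p₃|` and phonon dispersion `ω(p) = |p|`. -/
noncomputable def Qres (R : ℝ) (f : (Fin 3 → ℤ) → ℝ) (p1 : Fin 3 → ℤ) : ℝ :=
  (∑ p2 ∈ latticeBall R, ∑ p3 ∈ latticeBall R,
      if p1 = p2 + p3 ∧ enorm3 p1 = enorm3 p2 + enorm3 p3 then
        enorm3 p1 * enorm3 p2 * enorm3 p3 *
          (f p2 * f p3 - f p1 * (f p2 + f p3)) else 0)
  - 2 * ∑ p2 ∈ latticeBall R, ∑ p3 ∈ latticeBall R,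
      if p3 = p1 + p2 ∧ enorm3 p3 = enorm3 p1 + enorm3 p2 then
        enorm3 p1 * enorm3 p2 * enorm3 p3 *
          (f p1 * f p2 - f p3 * (f p1 + f p2)) else 0

/-- Right-hand side of the discrete near-resonance acoustic wave kinetic system with
resonance broadening `Λ`. -/
noncomputable def QNR (R Λ : ℝ) (f : (Fin 3 → ℤ) → ℝ) (p1 : Fin 3 → ℤ) : ℝ :=
  (∑ p2 ∈ latticeBall R, ∑ p3 ∈ latticeBall R,
      if p1 = p2 + p3 ∧ |enorm3 p1 - enorm3 p2 - enorm3 p3| ≤ Λ then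
        enorm3 p1 * enorm3 p2 * enorm3 p3 *
          (f p2 * f p3 - f p1 * (f p2 + f p3)) else 0)
  - 2 * ∑ p2 ∈ latticeBall R, ∑ p3 ∈ latticeBall R,
      if p3 = p1 + p2 ∧ |enorm3 p3 - enorm3 p1 - enorm3 p2| ≤ Λ then
        enorm3 p1 * enorm3 p2 * enorm3 p3 *
          (f p1 * f p2 - f p3 * (f p1 + f p2)) else 0

/-- `Q` lies on the open ray `{s • p : s > 0}` through `p`. -/
def OnRay (p Q : Fin 3 → ℤ) : Prop :=
  ∃ s : ℝ, 0 < s ∧ ∀ i, (Q i : ℝ) = s * (p i : ℝ)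

/-!
Below the threshold `Λ_*` every near-resonant triple is exactly resonant, and equality in the
triangle inequality `|y + z| = |y| + |z|` forces `y = aP`, `z = bP` for a primitive lattice vector
`P`. The system therefore splits into independent systems on the rays `{mP : 1 ≤ m ≤ N}`, whose
equilibria are `f_{mP} = 1 / (m ρ)`. On each ray the energy `∑ m f_{mP}` is conserved and the
entropy `-∑ log f_{mP}` decreases, its production dominating the squared defects
`1 / f_{(j+1)P} - 1 / f_{jP} - 1 / f_P`. The energy bounds `f` from above and the entropy bounds it
from below. Convexity of `-log`, Cauchy–Schwarz and telescoping bound the entropy gap to the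
equilibrium of the same energy by a multiple of the entropy production, and bound `∑ (f - f*)²` by
the gap; so the gap, and with it `f - f*`, decays exponentially.
-/

section RayStatics

open Finset Real

/-- `u m` stands for `f_{mP}` on the ray of `P`; the weight `m` comes from `|mP| = m |P|`. -/
def rayEnergy (N : ℕ) (u : ℕ → ℝ) : ℝ := ∑ m ∈ Icc 1 N, (m : ℝ) * u m

noncomputable def rayEntropy (N : ℕ) (u : ℕ → ℝ) : ℝ := ∑ m ∈ Icc 1 N, -log (u m)

/-- The equilibrium `u_m = 1 / (m ρ)` with `ρ = N / E`, the one of energy `E`. -/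
noncomputable def rayEquilibrium (N : ℕ) (E : ℝ) (m : ℕ) : ℝ := E / (m * N)

/-- Equilibria are the `u` with `1 / u` linear in `m`; this is the defect of the triple
`(j + 1, j, 1)`. -/
noncomputable def rayDefect (u : ℕ → ℝ) (j : ℕ) : ℝ := 1 / u (j + 1) - 1 / u j - 1 / u 1

noncomputable def rayDissipation (N : ℕ) (u : ℕ → ℝ) : ℝ :=
  ∑ j ∈ Icc 1 (N - 1), u (j + 1) * u j * u 1 * rayDefect u j ^ 2

noncomputable def rayEntropyGap (N : ℕ) (u : ℕ → ℝ) : ℝ :=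
  rayEntropy N u - rayEntropy N (rayEquilibrium N (rayEnergy N u))

variable {N : ℕ} {u : ℕ → ℝ}

lemma le_rayEnergy (hu : ∀ m ∈ Icc 1 N, 0 < u m) {m : ℕ} (hm : m ∈ Icc 1 N) :
    u m ≤ rayEnergy N u := by
  have h1 : (1 : ℝ) ≤ m := by exact_mod_cast (mem_Icc.mp hm).1
  calc u m ≤ m * u m := le_mul_of_one_le_left (hu m hm).le h1
    _ ≤ rayEnergy N u := single_le_sum (f := fun m : ℕ => (m : ℝ) * u m)
        (fun k hk => mul_nonneg (Nat.cast_nonneg k) (hu k hk).le) hm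

lemma rayEnergy_pos (hN : 1 ≤ N) (hu : ∀ m ∈ Icc 1 N, 0 < u m) : 0 < rayEnergy N u :=
  (hu 1 (mem_Icc.mpr ⟨le_rfl, hN⟩)).trans_le (le_rayEnergy hu (mem_Icc.mpr ⟨le_rfl, hN⟩))

lemma rayEnergy_rayEquilibrium (hN : 1 ≤ N) (E : ℝ) : rayEnergy N (rayEquilibrium N E) = E := by
  have hN' : (N : ℝ) ≠ 0 := by positivity
  have hterm : ∀ m ∈ Icc 1 N, (m : ℝ) * rayEquilibrium N E m = E / N := fun m hm => by
    have : (m : ℝ) ≠ 0 := by have := (mem_Icc.mp hm).1; positivity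
    rw [rayEquilibrium]; field_simp
  rw [rayEnergy, sum_congr rfl hterm, sum_const, Nat.card_Icc, Nat.add_sub_cancel,
    nsmul_eq_mul]
  field_simp

lemma rayEquilibrium_le (hN : 1 ≤ N) {E : ℝ} (hE : 0 ≤ E) {m : ℕ} (hm : m ∈ Icc 1 N) :
    rayEquilibrium N E m ≤ E := by
  have hmN : (1 : ℝ) ≤ m * N := one_le_mul_of_one_le_of_one_le
    (by exact_mod_cast (mem_Icc.mp hm).1) (by exact_mod_cast hN)
  exact div_le_self hE hmN

/-- From `x - 1 - log x ≥ (√x - 1)²`, that is `log √x ≤ √x - 1`, with `x = a / b`. -/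
lemma sq_sub_le_mul_log_sub {a b : ℝ} (ha : 0 < a) (hb : 0 < b) :
    (a - b) ^ 2 ≤ 2 * b * (a + b) * (log b - log a - 1 + a / b) := by
  set s := √(a / b)
  have hs0 : 0 < s := sqrt_pos.mpr (div_pos ha hb)
  have hss : s ^ 2 = a / b := sq_sqrt (div_pos ha hb).le
  have hgap : (s - 1) ^ 2 ≤ log b - log a - 1 + a / b := by
    have hlog : log a - log b = 2 * log s := by
      rw [← log_div ha.ne' hb.ne', ← hss, log_pow, Nat.cast_ofNat]
    nlinarith [log_le_sub_one_of_pos hs0]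
  have ha' : a = b * s ^ 2 := by rw [hss]; field_simp
  calc (a - b) ^ 2 = b ^ 2 * (s - 1) ^ 2 * (s + 1) ^ 2 := by rw [ha']; ring
    _ ≤ b ^ 2 * (s - 1) ^ 2 * (2 * (s ^ 2 + 1)) := by
        gcongr; nlinarith [sq_nonneg (s - 1)]
    _ = 2 * b * (a + b) * (s - 1) ^ 2 := by rw [ha']; ring
    _ ≤ 2 * b * (a + b) * (log b - log a - 1 + a / b) := by gcongr

lemma rayEntropyGap_eq_sum (hN : 1 ≤ N) (hu : ∀ m ∈ Icc 1 N, 0 < u m) :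
    rayEntropyGap N u =
      ∑ m ∈ Icc 1 N, (log (rayEquilibrium N (rayEnergy N u) m) - log (u m) - 1 +
        u m / rayEquilibrium N (rayEnergy N u) m) := by
  set E := rayEnergy N u
  have hE : E ≠ 0 := (rayEnergy_pos hN hu).ne'
  have hN' : (N : ℝ) ≠ 0 := by positivity
  have hratio : ∑ m ∈ Icc 1 N, u m / rayEquilibrium N E m = ∑ _m ∈ Icc 1 N, (1 : ℝ) := by
    have hterm : ∀ m ∈ Icc 1 N, u m / rayEquilibrium N E m = N / E * (m * u m) := fun m _ => by
      rw [rayEquilibrium]; field_simp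
    rw [sum_congr rfl hterm, ← mul_sum, sum_const, Nat.card_Icc, Nat.add_sub_cancel,
      nsmul_eq_mul, mul_one]
    exact div_mul_cancel₀ _ hE
  simp only [rayEntropyGap, rayEntropy, sub_add, sum_sub_distrib, hratio, sub_self, sub_zero,
    sum_neg_distrib]
  ring

lemma sum_sq_sub_rayEquilibrium_le (hN : 1 ≤ N) (hu : ∀ m ∈ Icc 1 N, 0 < u m) :
    ∑ m ∈ Icc 1 N, (u m - rayEquilibrium N (rayEnergy N u) m) ^ 2 ≤
      4 * rayEnergy N u ^ 2 * rayEntropyGap N u := by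
  set E := rayEnergy N u
  have hE := rayEnergy_pos hN hu
  rw [rayEntropyGap_eq_sum hN hu, mul_sum]
  refine sum_le_sum fun m hm => ?_
  have hv : 0 < rayEquilibrium N E m := by
    have := (mem_Icc.mp hm).1
    exact div_pos hE (by positivity)
  have hbound := sq_sub_le_mul_log_sub (hu m hm) hv
  have hφ : 0 ≤ log (rayEquilibrium N E m) - log (u m) - 1 + u m / rayEquilibrium N E m :=
    nonneg_of_mul_nonneg_right ((sq_nonneg _).trans hbound)
      (mul_pos (mul_pos two_pos hv) (add_pos (hu m hm) hv))
  refine hbound.trans (mul_le_mul_of_nonneg_right ?_ hφ)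
  have hvE := rayEquilibrium_le hN hE.le hm
  have huE := le_rayEnergy hu hm
  nlinarith

lemma rayEntropyGap_nonneg (hN : 1 ≤ N) (hu : ∀ m ∈ Icc 1 N, 0 < u m) : 0 ≤ rayEntropyGap N u :=
  nonneg_of_mul_nonneg_right ((sum_nonneg fun _ _ => sq_nonneg _).trans
    (sum_sq_sub_rayEquilibrium_le hN hu)) (by have := rayEnergy_pos hN hu; positivity)

lemma rayEntropyGap_le_sum_mul (hN : 1 ≤ N) (hu : ∀ m ∈ Icc 1 N, 0 < u m) :
    rayEntropyGap N u ≤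
      ∑ m ∈ Icc 1 N,
        (rayEquilibrium N (rayEnergy N u) m - u m) * (1 / u m - m * (1 / u 1)) := by
  set v := rayEquilibrium N (rayEnergy N u)
  -- the energies of `u` and `v` agree, so the linear part of `1 / u` does not contribute
  have henergy : ∑ m ∈ Icc 1 N, (v m - u m) * (m * (1 / u 1)) = 0 := by
    have h : ∑ m ∈ Icc 1 N, (v m - u m) * (m * (1 / u 1)) =
        (rayEnergy N v - rayEnergy N u) * (1 / u 1) := by
      simp only [rayEnergy, ← sum_sub_distrib, sum_mul]
      exact sum_congr rfl fun m _ => by ring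
    rw [h, rayEnergy_rayEquilibrium hN, sub_self, zero_mul]
  rw [← add_zero (∑ m ∈ Icc 1 N, _), ← henergy, ← sum_add_distrib, rayEntropyGap, rayEntropy,
    rayEntropy, ← sum_sub_distrib]
  refine sum_le_sum fun m hm => ?_
  have hv : 0 < v m := by
    have := (mem_Icc.mp hm).1
    exact div_pos (rayEnergy_pos hN hu) (by positivity)
  have h := log_le_sub_one_of_pos (div_pos hv (hu m hm))
  rw [log_div hv.ne' (hu m hm).ne'] at h
  have hum := (hu m hm).ne'
  calc -log (u m) - -log (v m) ≤ v m / u m - 1 := by linarith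
    _ = _ := by field_simp; ring

lemma inv_sub_mul_inv_eq_sum_rayDefect {m : ℕ} (hm : 1 ≤ m) :
    1 / u m - m * (1 / u 1) = ∑ j ∈ Ico 1 m, rayDefect u j := by
  induction m, hm using Nat.le_induction with
  | base => simp
  | succ m hm ih =>
    rw [sum_Ico_succ_top hm, ← ih, rayDefect]
    push_cast
    ring

lemma sum_sq_inv_sub_le_sum_sq_rayDefect (N : ℕ) (u : ℕ → ℝ) :
    ∑ m ∈ Icc 1 N, (1 / u m - m * (1 / u 1)) ^ 2 ≤
      (N : ℝ) ^ 2 * ∑ j ∈ Icc 1 (N - 1), rayDefect u j ^ 2 := by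
  have hterm : ∀ m ∈ Icc 1 N, (1 / u m - m * (1 / u 1)) ^ 2 ≤
      N * ∑ j ∈ Icc 1 (N - 1), rayDefect u j ^ 2 := fun m hm => by
    obtain ⟨hm1, hmN⟩ := mem_Icc.mp hm
    rw [inv_sub_mul_inv_eq_sum_rayDefect hm1]
    refine sq_sum_le_card_mul_sum_sq.trans (mul_le_mul ?_ ?_ (sum_nonneg fun _ _ => sq_nonneg _)
      (Nat.cast_nonneg _))
    · rw [Nat.card_Ico]; exact_mod_cast (by omega : m - 1 ≤ N)
    · exact sum_le_sum_of_subset_of_nonneg (fun j hj => by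
        simp only [mem_Ico, mem_Icc] at hj ⊢; omega) fun _ _ _ => sq_nonneg _
  refine (sum_le_sum hterm).trans_eq ?_
  rw [sum_const, Nat.card_Icc, Nat.add_sub_cancel, nsmul_eq_mul]
  ring

/-- Convexity of `-log` bounds the gap by the pairing of `u* - u` with `1 / u - m / u₁`; by
Cauchy–Schwarz and `∑ (u - u*)² ≲ gap`, the gap is then bounded by `∑ (1 / u - m / u₁)²`. -/
lemma rayEntropyGap_le (hN : 1 ≤ N) (hu : ∀ m ∈ Icc 1 N, 0 < u m) :
    rayEntropyGap N u ≤ 4 * rayEnergy N u ^ 2 * N ^ 2 * ∑ j ∈ Icc 1 (N - 1), rayDefect u j ^ 2 := by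
  set G := rayEntropyGap N u
  set A := ∑ m ∈ Icc 1 N, (u m - rayEquilibrium N (rayEnergy N u) m) ^ 2
  set B := ∑ m ∈ Icc 1 N, (1 / u m - m * (1 / u 1)) ^ 2
  set C := 4 * rayEnergy N u ^ 2
  have hA : A ≤ C * G := sum_sq_sub_rayEquilibrium_le hN hu
  have hG : 0 ≤ G := rayEntropyGap_nonneg hN hu
  have hG2 : G ^ 2 ≤ A * B := by
    have hCS := sum_mul_sq_le_sq_mul_sq (Icc 1 N)
      (fun m => rayEquilibrium N (rayEnergy N u) m - u m) fun m => 1 / u m - m * (1 / u 1)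
    have hswap : ∑ m ∈ Icc 1 N, (rayEquilibrium N (rayEnergy N u) m - u m) ^ 2 = A :=
      sum_congr rfl fun _ _ => by ring
    rw [hswap] at hCS
    exact (pow_le_pow_left₀ hG (rayEntropyGap_le_sum_mul hN hu) 2).trans hCS
  have hGB : G ≤ C * B := by
    rcases hG.eq_or_lt with h0 | hpos
    · rw [← h0]; positivity
    · nlinarith [sum_nonneg fun m (_ : m ∈ Icc 1 N) => sq_nonneg (1 / u m - m * (1 / u 1))]
  calc G ≤ C * B := hGB
    _ ≤ C * (N ^ 2 * ∑ j ∈ Icc 1 (N - 1), rayDefect u j ^ 2) :=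
        mul_le_mul_of_nonneg_left (sum_sq_inv_sub_le_sum_sq_rayDefect N u) (by positivity)
    _ = _ := by ring

lemma exp_neg_rayEntropy_add_rayEnergy_le (hu : ∀ m ∈ Icc 1 N, 0 < u m) {m : ℕ}
    (hm : m ∈ Icc 1 N) : exp (-(rayEntropy N u + rayEnergy N u)) ≤ u m := by
  have hterm : ∀ k ∈ Icc 1 N, 0 ≤ -log (u k) + u k := fun k hk => by
    linarith [log_le_sub_one_of_pos (hu k hk)]
  have hmass : ∑ k ∈ Icc 1 N, u k ≤ rayEnergy N u := sum_le_sum fun k hk =>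
    le_mul_of_one_le_left (hu k hk).le (by exact_mod_cast (mem_Icc.mp hk).1)
  have hlog : -log (u m) ≤ rayEntropy N u + rayEnergy N u := by
    have := single_le_sum hterm hm
    rw [sum_add_distrib] at this
    unfold rayEntropy
    linarith [(hu m hm).le]
  calc exp (-(rayEntropy N u + rayEnergy N u)) ≤ exp (log (u m)) := exp_le_exp.mpr (by linarith)
    _ = u m := exp_log (hu m hm)

lemma pow_three_mul_le_rayDissipation {δ : ℝ} (hδ : 0 ≤ δ) (hu : ∀ m ∈ Icc 1 N, δ ≤ u m) :
    δ ^ 3 * ∑ j ∈ Icc 1 (N - 1), rayDefect u j ^ 2 ≤ rayDissipation N u := by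
  rw [mul_sum]
  refine sum_le_sum fun j hj => mul_le_mul_of_nonneg_right ?_ (sq_nonneg _)
  obtain ⟨hj1, hjN⟩ := mem_Icc.mp hj
  have h1 := hu (j + 1) (mem_Icc.mpr ⟨by omega, by omega⟩)
  have h2 := hu j (mem_Icc.mpr ⟨hj1, by omega⟩)
  have h3 := hu 1 (mem_Icc.mpr ⟨le_rfl, by omega⟩)
  calc δ ^ 3 = δ * δ * δ := by ring
    _ ≤ _ := mul_le_mul (mul_le_mul h1 h2 hδ (hδ.trans h1)) h3 hδ
        (mul_nonneg (hδ.trans h1) (hδ.trans h2))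

end RayStatics

section Decay

open Set Real

variable {F F' : ℝ → ℝ}

lemma antitoneOn_Ici_of_hasDerivAt_nonpos (hF : ∀ t, 0 ≤ t → HasDerivAt F (F' t) t)
    (hF' : ∀ t, 0 ≤ t → F' t ≤ 0) : AntitoneOn F (Ici 0) := by
  refine antitoneOn_of_hasDerivWithinAt_nonpos (f' := F') (convex_Ici 0)
    (fun t ht => (hF t ht).continuousAt.continuousWithinAt) (fun t ht => ?_) fun t ht => ?_
  all_goals rw [interior_Ici] at ht
  exacts [(hF t (le_of_lt ht)).hasDerivWithinAt, hF' t (le_of_lt ht)]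

lemma eq_of_hasDerivAt_eq_zero (hF : ∀ t, 0 ≤ t → HasDerivAt F (F' t) t)
    (hF' : ∀ t, 0 ≤ t → F' t = 0) {t : ℝ} (ht : 0 ≤ t) : F t = F 0 := by
  have h := antitoneOn_Ici_of_hasDerivAt_nonpos hF fun s hs => (hF' s hs).le
  have hneg := antitoneOn_Ici_of_hasDerivAt_nonpos (fun s hs => (hF s hs).neg)
    fun s hs => by rw [hF' s hs, neg_zero]
  exact le_antisymm (h self_mem_Ici ht ht) (neg_le_neg_iff.mp (hneg self_mem_Ici ht ht))

lemma le_mul_exp_of_hasDerivAt_le (κ : ℝ) (hF : ∀ t, 0 ≤ t → HasDerivAt F (F' t) t)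
    (hF' : ∀ t, 0 ≤ t → F' t ≤ -κ * F t) {t : ℝ} (ht : 0 ≤ t) : F t ≤ F 0 * exp (-κ * t) := by
  have hG : ∀ s, 0 ≤ s → HasDerivAt (fun s => F s * exp (κ * s))
      ((F' s + κ * F s) * exp (κ * s)) s := fun s hs =>
    ((hF s hs).fun_mul ((hasDerivAt_id' s).const_mul κ).exp).congr_deriv (by ring)
  have hanti := antitoneOn_Ici_of_hasDerivAt_nonpos hG fun s hs =>
    mul_nonpos_of_nonpos_of_nonneg (by linarith [hF' s hs]) (exp_pos _).le
  have h := hanti self_mem_Ici ht ht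
  simp only [mul_zero, exp_zero, mul_one] at h
  calc F t = F t * exp (κ * t) * exp (-κ * t) := by
        rw [mul_assoc, ← exp_add, neg_mul, add_neg_cancel, exp_zero, mul_one]
    _ ≤ F 0 * exp (-κ * t) := mul_le_mul_of_nonneg_right h (exp_pos _).le

end Decay

section RayFlow

open Finset Real

/-- The dynamics `u t m = f_t(mP)` on one ray, with right-hand side `Q`, reduced to what the
convergence argument uses. -/
structure IsDissipativeRayFlow (N : ℕ) (c : ℝ) (u Q : ℝ → ℕ → ℝ) : Prop where
  pos : ∀ t, 0 ≤ t → ∀ m ∈ Icc 1 N, 0 < u t m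
  hasDerivAt : ∀ t, 0 ≤ t → ∀ m ∈ Icc 1 N, HasDerivAt (fun s => u s m) (Q t m) t
  energy : ∀ t, 0 ≤ t → ∑ m ∈ Icc 1 N, (m : ℝ) * Q t m = 0
  entropy : ∀ t, 0 ≤ t → ∑ m ∈ Icc 1 N, -(1 / u t m) * Q t m ≤ -c * rayDissipation N (u t)

namespace IsDissipativeRayFlow

variable {N : ℕ} {c : ℝ} {u Q : ℝ → ℕ → ℝ}

lemma rayEnergy_eq (h : IsDissipativeRayFlow N c u Q) {t : ℝ} (ht : 0 ≤ t) :
    rayEnergy N (u t) = rayEnergy N (u 0) :=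
  eq_of_hasDerivAt_eq_zero (fun s hs => HasDerivAt.fun_sum fun m hm =>
    (h.hasDerivAt s hs m hm).const_mul (m : ℝ)) h.energy ht

lemma hasDerivAt_rayEntropy (h : IsDissipativeRayFlow N c u Q) {t : ℝ} (ht : 0 ≤ t) :
    HasDerivAt (fun s => rayEntropy N (u s)) (∑ m ∈ Icc 1 N, -(1 / u t m) * Q t m) t :=
  HasDerivAt.fun_sum fun m hm =>
    ((h.hasDerivAt t ht m hm).log (h.pos t ht m hm).ne').neg.congr_deriv (by ring)

lemma rayEntropy_le (h : IsDissipativeRayFlow N c u Q) (hc : 0 ≤ c) {t : ℝ} (ht : 0 ≤ t) :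
    rayEntropy N (u t) ≤ rayEntropy N (u 0) := by
  refine antitoneOn_Ici_of_hasDerivAt_nonpos (fun s hs => h.hasDerivAt_rayEntropy hs)
    (fun s hs => (h.entropy s hs).trans ?_) Set.self_mem_Ici ht ht
  have hD : 0 ≤ rayDissipation N (u s) := by
    simpa using pow_three_mul_le_rayDissipation le_rfl fun m hm => (h.pos s hs m hm).le
  nlinarith

lemma exp_neg_le (h : IsDissipativeRayFlow N c u Q) (hc : 0 ≤ c) {t : ℝ} (ht : 0 ≤ t) {m : ℕ}
    (hm : m ∈ Icc 1 N) : exp (-(rayEntropy N (u 0) + rayEnergy N (u 0))) ≤ u t m := by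
  refine le_trans ?_ (exp_neg_rayEntropy_add_rayEnergy_le (h.pos t ht) hm)
  rw [exp_le_exp, h.rayEnergy_eq ht]
  linarith [h.rayEntropy_le hc ht]

lemma rayEntropyGap_eq (h : IsDissipativeRayFlow N c u Q) {t : ℝ} (ht : 0 ≤ t) :
    rayEntropyGap N (u t) =
      rayEntropy N (u t) - rayEntropy N (rayEquilibrium N (rayEnergy N (u 0))) := by
  rw [rayEntropyGap, h.rayEnergy_eq ht]

lemma exists_rayEntropyGap_le_exp (h : IsDissipativeRayFlow N c u Q) (hN : 1 ≤ N) (hc : 0 < c) :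
    ∃ κ > 0, ∀ t, 0 ≤ t → rayEntropyGap N (u t) ≤ rayEntropyGap N (u 0) * exp (-κ * t) := by
  set E := rayEnergy N (u 0)
  set δ := exp (-(rayEntropy N (u 0) + E))
  have hE : 0 < E := rayEnergy_pos hN (h.pos 0 le_rfl)
  have hK : 0 < 4 * E ^ 2 * N ^ 2 := by
    have : (0 : ℝ) < N := by exact_mod_cast hN
    positivity
  refine ⟨c * δ ^ 3 / (4 * E ^ 2 * N ^ 2), by positivity, fun t ht => ?_⟩
  rw [h.rayEntropyGap_eq ht, h.rayEntropyGap_eq le_rfl]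
  refine le_mul_exp_of_hasDerivAt_le _ (fun s hs => (h.hasDerivAt_rayEntropy hs).sub_const _)
    (fun s hs => ?_) ht
  set S := ∑ j ∈ Icc 1 (N - 1), rayDefect (u s) j ^ 2
  have hgap : rayEntropy N (u s) - rayEntropy N (rayEquilibrium N E) ≤ 4 * E ^ 2 * N ^ 2 * S := by
    have := rayEntropyGap_le hN (h.pos s hs)
    rwa [h.rayEntropyGap_eq hs, h.rayEnergy_eq hs] at this
  have hdiss : δ ^ 3 * S ≤ rayDissipation N (u s) :=
    pow_three_mul_le_rayDissipation (exp_pos _).le fun m hm => h.exp_neg_le hc.le hs hm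
  have hrate : c * δ ^ 3 / (4 * E ^ 2 * N ^ 2) *
      (rayEntropy N (u s) - rayEntropy N (rayEquilibrium N E)) ≤ c * δ ^ 3 * S :=
    calc _ ≤ c * δ ^ 3 / (4 * E ^ 2 * N ^ 2) * (4 * E ^ 2 * N ^ 2 * S) :=
          mul_le_mul_of_nonneg_left hgap (by positivity)
      _ = c * δ ^ 3 * S := by field_simp
  nlinarith [h.entropy s hs]

theorem exists_abs_sub_rayEquilibrium_le_exp (h : IsDissipativeRayFlow N c u Q) (hN : 1 ≤ N)
    (hc : 0 < c) : ∃ C₁ > 0, ∃ C₂ > 0, ∀ t, 0 ≤ t → ∀ m ∈ Icc 1 N,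
      |u t m - rayEquilibrium N (rayEnergy N (u 0)) m| ≤ C₁ * exp (-C₂ * t) := by
  obtain ⟨κ, hκ, hdecay⟩ := h.exists_rayEntropyGap_le_exp hN hc
  set E := rayEnergy N (u 0)
  set G₀ := rayEntropyGap N (u 0)
  have hE : 0 < E := rayEnergy_pos hN (h.pos 0 le_rfl)
  have hG₀ : 0 ≤ G₀ := rayEntropyGap_nonneg hN (h.pos 0 le_rfl)
  refine ⟨2 * E * (G₀ + 1), by positivity, κ / 2, by positivity, fun t ht m hm => ?_⟩
  refine abs_le_of_sq_le_sq ?_ (by positivity)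
  calc (u t m - rayEquilibrium N E m) ^ 2
      ≤ ∑ k ∈ Icc 1 N, (u t k - rayEquilibrium N E k) ^ 2 :=
        single_le_sum (f := fun k => (u t k - rayEquilibrium N E k) ^ 2)
          (fun _ _ => sq_nonneg _) hm
    _ ≤ 4 * E ^ 2 * (G₀ * exp (-κ * t)) := by
        have hdist := sum_sq_sub_rayEquilibrium_le hN (h.pos t ht)
        rw [h.rayEnergy_eq ht] at hdist
        exact hdist.trans (mul_le_mul_of_nonneg_left (hdecay t ht) (by positivity))
    _ ≤ (2 * E * (G₀ + 1)) ^ 2 * exp (-κ * t) := by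
        rw [← mul_assoc]
        refine mul_le_mul_of_nonneg_right ?_ (exp_pos _).le
        nlinarith
    _ = (2 * E * (G₀ + 1)) ^ 2 * exp (-(κ / 2) * t) ^ 2 := by rw [← exp_nat_mul]; ring_nf
    _ = (2 * E * (G₀ + 1) * exp (-(κ / 2) * t)) ^ 2 := (mul_pow _ _ 2).symm

end IsDissipativeRayFlow

end RayFlow

lemma exists_exp_bound_of_forall_mem {ι : Type*} (s : Finset ι) (a : ι → ℝ → ℝ)
    (h : ∀ i ∈ s, ∃ C₁ > 0, ∃ C₂ > 0, ∀ t, 0 ≤ t → a i t ≤ C₁ * Real.exp (-C₂ * t)) :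
    ∃ C₁ > 0, ∃ C₂ > 0, ∀ i ∈ s, ∀ t, 0 ≤ t → a i t ≤ C₁ * Real.exp (-C₂ * t) := by
  classical
  induction s using Finset.induction_on with
  | empty => exact ⟨1, one_pos, 1, one_pos, by simp⟩
  | insert i s _ ih =>
    obtain ⟨C₁, hC₁, C₂, hC₂, hi⟩ := h i (Finset.mem_insert_self i s)
    obtain ⟨D₁, hD₁, D₂, hD₂, hs⟩ := ih fun j hj => h j (Finset.mem_insert_of_mem hj)
    have hmono : ∀ {A r : ℝ}, 0 < A → A ≤ max C₁ D₁ → min C₂ D₂ ≤ r → ∀ t : ℝ, 0 ≤ t →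
        A * Real.exp (-r * t) ≤ max C₁ D₁ * Real.exp (-min C₂ D₂ * t) := fun hA hA₁ hr t ht =>
      mul_le_mul hA₁ (Real.exp_le_exp.mpr (by nlinarith)) (Real.exp_pos _).le (hA.le.trans hA₁)
    refine ⟨max C₁ D₁, lt_max_of_lt_left hC₁, min C₂ D₂, lt_min hC₂ hD₂, fun j hj t ht => ?_⟩
    rcases Finset.mem_insert.mp hj with rfl | hj
    · exact (hi t ht).trans (hmono hC₁ (le_max_left _ _) (min_le_left _ _) t ht)
    · exact (hs j hj t ht).trans (hmono hD₁ (le_max_right _ _) (min_le_right _ _) t ht)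

namespace LatticeVec

variable {ι : Type*} [Fintype ι]

def content (p : ι → ℤ) : ℕ := (Finset.univ.gcd p).natAbs

def primPart (p : ι → ℤ) : ι → ℤ := fun i => p i / Finset.univ.gcd p

lemma content_cast (p : ι → ℤ) : (content p : ℤ) = Finset.univ.gcd p := by
  refine Int.natAbs_of_nonneg ?_
  rw [← Finset.normalize_gcd, ← Int.abs_eq_normalize]
  exact abs_nonneg _

lemma content_smul_primPart (p : ι → ℤ) : (content p : ℤ) • primPart p = p := by
  funext i
  rw [Pi.smul_apply, smul_eq_mul, content_cast, primPart]
  exact Int.mul_ediv_cancel' (Finset.gcd_dvd (Finset.mem_univ i))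

lemma content_pos {p : ι → ℤ} (hp : p ≠ 0) : 0 < content p := by
  refine Nat.pos_of_ne_zero fun h => hp ?_
  rw [← content_smul_primPart p, h, Nat.cast_zero, zero_smul]

lemma content_smul (a : ℤ) (p : ι → ℤ) : content (a • p) = a.natAbs * content p := by
  change (Finset.univ.gcd fun i => a * p i).natAbs = _
  rw [Finset.gcd_mul_left, Int.natAbs_mul, ← Int.abs_eq_normalize, Int.natAbs_abs, content]

lemma content_natCast_smul (m : ℕ) (p : ι → ℤ) : content ((m : ℤ) • p) = m * content p := by
  rw [content_smul, Int.natAbs_natCast]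

lemma content_primPart {p : ι → ℤ} (hp : p ≠ 0) : content (primPart p) = 1 := by
  have h := content_natCast_smul (content p) (primPart p)
  rw [content_smul_primPart] at h
  exact (Nat.mul_eq_left (content_pos hp).ne').mp h.symm

lemma primPart_smul {P : ι → ℤ} (hP : content P = 1) {m : ℕ} (hm : 0 < m) :
    primPart ((m : ℤ) • P) = P := by
  have hgcd : Finset.univ.gcd ((m : ℤ) • P) = m := by
    rw [← content_cast, content_natCast_smul, hP, mul_one]
  funext i
  rw [primPart, hgcd, Pi.smul_apply, smul_eq_mul, Int.mul_ediv_cancel_left _ (by omega)]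

lemma eq_of_smul_eq_smul {P Q : ι → ℤ} (hP : content P = 1) (hQ : content Q = 1) {a b : ℤ}
    (ha : 0 < a) (hb : 0 < b) (h : a • P = b • Q) : a = b ∧ P = Q := by
  have hab : a = b := by
    have := congrArg content h
    rw [content_smul, content_smul, hP, hQ] at this
    omega
  subst hab
  exact ⟨rfl, smul_right_injective _ ha.ne' h⟩

lemma ne_zero_of_content_eq_one {P : ι → ℤ} (hP : content P = 1) : P ≠ 0 := by
  rintro rfl
  simp [content, Finset.gcd_eq_zero_iff.mpr] at hP

end LatticeVec

open LatticeVec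

section EuclideanNorm

def toEuclidean3 (p : Fin 3 → ℤ) : EuclideanSpace ℝ (Fin 3) := WithLp.toLp 2 fun i => (p i : ℝ)

lemma enorm3_eq_norm (p : Fin 3 → ℤ) : enorm3 p = ‖toEuclidean3 p‖ := by
  simp [enorm3, toEuclidean3, EuclideanSpace.norm_eq]

lemma toEuclidean3_add (p q : Fin 3 → ℤ) :
    toEuclidean3 (p + q) = toEuclidean3 p + toEuclidean3 q := by
  ext i; simp [toEuclidean3]

lemma toEuclidean3_smul (a : ℤ) (p : Fin 3 → ℤ) :
    toEuclidean3 (a • p) = (a : ℝ) • toEuclidean3 p := by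
  ext i; simp [toEuclidean3]

lemma toEuclidean3_ne_zero {p : Fin 3 → ℤ} (hp : p ≠ 0) : toEuclidean3 p ≠ 0 := by
  refine fun h => hp (funext fun i => ?_)
  simpa [toEuclidean3] using congrArg (fun v => v i) h

lemma enorm3_smul (a : ℤ) (p : Fin 3 → ℤ) : enorm3 (a • p) = |(a : ℝ)| * enorm3 p := by
  rw [enorm3_eq_norm, enorm3_eq_norm, toEuclidean3_smul, norm_smul, Real.norm_eq_abs]

lemma enorm3_pos {p : Fin 3 → ℤ} (hp : p ≠ 0) : 0 < enorm3 p := by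
  rw [enorm3_eq_norm]
  exact norm_pos_iff.mpr (toEuclidean3_ne_zero hp)

lemma abs_apply_le_enorm3 (p : Fin 3 → ℤ) (i : Fin 3) : |(p i : ℝ)| ≤ enorm3 p := by
  rw [enorm3_eq_norm]
  simpa [toEuclidean3] using PiLp.norm_apply_le (toEuclidean3 p) i

lemma mem_latticeBall {R : ℝ} {p : Fin 3 → ℤ} :
    p ∈ latticeBall R ↔ 0 < enorm3 p ∧ enorm3 p < R := by
  refine ⟨fun h => (Finset.mem_filter.mp h).2, fun h => Finset.mem_filter.mpr ⟨?_, h⟩⟩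
  have hbound : ∀ i, |p i| ≤ ⌈R⌉ := fun i => by
    have := (abs_apply_le_enorm3 p i).trans (h.2.le.trans (Int.le_ceil R))
    exact_mod_cast this
  exact Finset.mem_Icc.mpr ⟨fun i => neg_le_of_abs_le (hbound i), fun i => le_of_abs_le (hbound i)⟩

lemma ne_zero_of_mem_latticeBall {R : ℝ} {p : Fin 3 → ℤ} (hp : p ∈ latticeBall R) : p ≠ 0 := by
  rintro rfl
  simp [mem_latticeBall, enorm3] at hp

lemma onRay_of_enorm3_add_eq {p q : Fin 3 → ℤ} (hp : p ≠ 0) (hq : q ≠ 0)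
    (h : enorm3 (p + q) = enorm3 p + enorm3 q) : OnRay p q := by
  rw [enorm3_eq_norm, enorm3_eq_norm, enorm3_eq_norm, toEuclidean3_add] at h
  obtain ⟨s, hs, hsq⟩ :=
    (sameRay_iff_norm_add.mpr h).exists_pos_left (toEuclidean3_ne_zero hp) (toEuclidean3_ne_zero hq)
  exact ⟨s, hs, fun i => by simpa [toEuclidean3] using (congrArg (fun v => v i) hsq).symm⟩

end EuclideanNorm

section Rays

lemma exists_smul_eq_smul_of_onRay {p q : Fin 3 → ℤ} (hp : p ≠ 0) (h : OnRay p q) :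
    ∃ a b : ℤ, 0 < a ∧ 0 < b ∧ a • q = b • p := by
  obtain ⟨s, hs, hq⟩ := h
  obtain ⟨i, hi⟩ : ∃ i, p i ≠ 0 := by simpa [funext_iff] using hp
  -- integer proportionality constants: `|p|² q = ⟪q, p⟫ p`
  have hn : 0 < ∑ i, p i * p i :=
    Finset.sum_pos' (fun j _ => mul_self_nonneg _) ⟨i, Finset.mem_univ i, mul_self_pos.mpr hi⟩
  have hc : ((∑ i, q i * p i : ℤ) : ℝ) = s * (∑ i, p i * p i : ℤ) := by
    push_cast
    rw [Finset.mul_sum]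
    exact Finset.sum_congr rfl fun j _ => by rw [hq j]; ring
  refine ⟨∑ i, p i * p i, ∑ i, q i * p i, hn, ?_, funext fun j => ?_⟩
  · have : (0 : ℝ) < ((∑ i, q i * p i : ℤ) : ℝ) := by
      rw [hc]; exact mul_pos hs (by exact_mod_cast hn)
    exact_mod_cast this
  · have : (((∑ i, p i * p i) * q j : ℤ) : ℝ) = (((∑ i, q i * p i) * p j : ℤ) : ℝ) := by
      push_cast at hc ⊢
      rw [hc, hq j]; ring
    exact_mod_cast this

lemma OnRay.ne_zero {p q : Fin 3 → ℤ} (hp : p ≠ 0) (h : OnRay p q) : q ≠ 0 := by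
  obtain ⟨s, hs, hq⟩ := h
  obtain ⟨i, hi⟩ : ∃ i, p i ≠ 0 := by simpa [funext_iff] using hp
  rintro rfl
  have := hq i
  simp only [Pi.zero_apply, Int.cast_zero, zero_eq_mul] at this
  exact this.elim hs.ne' (by exact_mod_cast hi)

lemma primPart_eq_of_onRay {p q : Fin 3 → ℤ} (hp : p ≠ 0) (h : OnRay p q) :
    primPart q = primPart p := by
  obtain ⟨a, b, ha, hb, hab⟩ := exists_smul_eq_smul_of_onRay hp h
  have hq := h.ne_zero hp
  rw [← content_smul_primPart q, ← content_smul_primPart p, smul_smul, smul_smul] at hab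
  exact (eq_of_smul_eq_smul (content_primPart hq) (content_primPart hp)
    (mul_pos ha (by exact_mod_cast content_pos hq)) (mul_pos hb (by exact_mod_cast content_pos hp))
    hab).2

lemma onRay_primPart {p : Fin 3 → ℤ} (hp : p ≠ 0) : OnRay p (primPart p) := by
  have hc : (0 : ℝ) < content p := by exact_mod_cast content_pos hp
  refine ⟨1 / content p, by positivity, fun i => ?_⟩
  have h := congrFun (content_smul_primPart p) i
  simp only [Pi.smul_apply, smul_eq_mul] at h
  rw [← h, Int.cast_mul, Int.cast_natCast]
  field_simp

lemma eq_primPart_of_onRay_of_minimal {p P : Fin 3 → ℤ} (hp : p ≠ 0) (hP : OnRay p P)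
    (hmin : ∀ Q : Fin 3 → ℤ, OnRay p Q → enorm3 P ≤ enorm3 Q) : P = primPart p := by
  have hprim : primPart P = primPart p := primPart_eq_of_onRay hp hP
  have hle := hmin _ (onRay_primPart hp)
  rw [← content_smul_primPart P, hprim, enorm3_smul] at hle
  simp only [Int.cast_natCast, Nat.abs_cast] at hle
  have hpos := enorm3_pos (ne_zero_of_content_eq_one (content_primPart hp))
  have h1 : content P = 1 := by
    have hle1 : (content P : ℝ) ≤ 1 := by nlinarith
    have := content_pos (hP.ne_zero hp)
    exact le_antisymm (by exact_mod_cast hle1) this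
  rw [← content_smul_primPart P, hprim, h1, Nat.cast_one, one_smul]

def IsResonant (x y z : Fin 3 → ℤ) : Prop := x = y + z ∧ enorm3 x = enorm3 y + enorm3 z

lemma IsResonant.primPart_eq {x y z : Fin 3 → ℤ} (h : IsResonant x y z) (hy : y ≠ 0)
    (hz : z ≠ 0) :
    primPart y = primPart x ∧ primPart z = primPart x ∧ content x = content y + content z := by
  obtain ⟨hsum, hnorm⟩ := h
  have hzy : primPart z = primPart y :=
    primPart_eq_of_onRay hy (onRay_of_enorm3_add_eq hy hz (hsum ▸ hnorm))
  have hx : x = ((content y + content z : ℕ) : ℤ) • primPart y := by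
    rw [hsum, Nat.cast_add, add_smul, content_smul_primPart, ← hzy, content_smul_primPart]
  have hP := content_primPart hy
  have hyz : 0 < content y + content z := by have := content_pos hy; omega
  rw [hx, primPart_smul hP hyz, content_natCast_smul, hP, mul_one]
  exact ⟨rfl, hzy, rfl⟩

noncomputable def rayLength (R : ℝ) (P : Fin 3 → ℤ) : ℕ := ⌈R / enorm3 P⌉₊ - 1

lemma natCast_smul_mem_latticeBall {R : ℝ} {P : Fin 3 → ℤ} (hP : P ≠ 0) {m : ℕ} :
    (m : ℤ) • P ∈ latticeBall R ↔ m ∈ Finset.Icc 1 (rayLength R P) := by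
  have hPpos := enorm3_pos hP
  rw [mem_latticeBall, enorm3_smul, Int.cast_natCast, Nat.abs_cast, Finset.mem_Icc, rayLength,
    ← lt_div_iff₀ hPpos, ← Nat.lt_ceil, mul_pos_iff_of_pos_right hPpos, Nat.cast_pos]
  omega

lemma content_mem_Icc_rayLength {R : ℝ} {p : Fin 3 → ℤ} (hp : p ∈ latticeBall R) :
    content p ∈ Finset.Icc 1 (rayLength R (primPart p)) := by
  have hp0 := ne_zero_of_mem_latticeBall hp
  rw [← natCast_smul_mem_latticeBall (ne_zero_of_content_eq_one (content_primPart hp0)),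
    content_smul_primPart]
  exact hp

lemma sum_ite_primPart_eq {R : ℝ} {P : Fin 3 → ℤ} (hP : content P = 1)
    (F : (Fin 3 → ℤ) → ℝ) :
    ∑ p ∈ latticeBall R, (if primPart p = P then F p else 0) =
      ∑ m ∈ Finset.Icc 1 (rayLength R P), F ((m : ℤ) • P) := by
  have hP0 := ne_zero_of_content_eq_one hP
  have hray : (latticeBall R).filter (fun p => primPart p = P) =
      (Finset.Icc 1 (rayLength R P)).image fun m : ℕ => (m : ℤ) • P := by
    ext p
    simp only [Finset.mem_filter, Finset.mem_image]
    constructor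
    · rintro ⟨hp, rfl⟩
      exact ⟨content p, content_mem_Icc_rayLength hp, content_smul_primPart p⟩
    · rintro ⟨m, hm, rfl⟩
      exact ⟨(natCast_smul_mem_latticeBall hP0).mpr hm,
        primPart_smul hP (Finset.mem_Icc.mp hm).1⟩
  rw [← Finset.sum_filter, hray, Finset.sum_image]
  intro a ha b hb hab
  exact_mod_cast (eq_of_smul_eq_smul hP hP (by exact_mod_cast (Finset.mem_Icc.mp ha).1)
    (by exact_mod_cast (Finset.mem_Icc.mp hb).1) hab).1

end Rays

section Collisions

open Finset

lemma QNR_eq_Qres {R Λ : ℝ} (hΛ : 0 ≤ Λ)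
    (hgap : ∀ x ∈ latticeBall R, ∀ y ∈ latticeBall R, ∀ z ∈ latticeBall R, x = y + z →
      enorm3 x ≠ enorm3 y + enorm3 z → Λ < |enorm3 x - enorm3 y - enorm3 z|)
    (g : (Fin 3 → ℤ) → ℝ) {x : Fin 3 → ℤ} (hx : x ∈ latticeBall R) :
    QNR R Λ g x = Qres R g x := by
  have hnear : ∀ x ∈ latticeBall R, ∀ y ∈ latticeBall R, ∀ z ∈ latticeBall R,
      (x = y + z ∧ |enorm3 x - enorm3 y - enorm3 z| ≤ Λ) ↔ IsResonant x y z :=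
    fun x hx y hy z hz => by
      refine ⟨fun ⟨hs, hle⟩ => ⟨hs, ?_⟩, fun ⟨hs, he⟩ => ⟨hs, by rw [he]; simpa using hΛ⟩⟩
      by_contra hne
      exact (hgap x hx y hy z hz hs hne).not_ge hle
  unfold QNR Qres
  congr 1
  · exact sum_congr rfl fun y hy => sum_congr rfl fun z hz =>
      if_congr (hnear x hx y hy z hz) rfl rfl
  · congr 1
    exact sum_congr rfl fun y hy => sum_congr rfl fun z hz =>
      if_congr (hnear z hz x hx y hy) rfl rfl

/-- The rate of the collision `x ⇄ y + z`. -/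
noncomputable def collisionTerm (g : (Fin 3 → ℤ) → ℝ) (x y z : Fin 3 → ℤ) : ℝ :=
  if IsResonant x y z then enorm3 x * enorm3 y * enorm3 z * (g y * g z - g x * (g y + g z)) else 0

lemma collisionTerm_comm (g : (Fin 3 → ℤ) → ℝ) (x y z : Fin 3 → ℤ) :
    collisionTerm g x y z = collisionTerm g x z y := by
  unfold collisionTerm IsResonant
  rw [add_comm y z, add_comm (enorm3 y)]
  split_ifs <;> ring

lemma Qres_eq_sum_collisionTerm (R : ℝ) (g : (Fin 3 → ℤ) → ℝ) (x : Fin 3 → ℤ) :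
    Qres R g x = ∑ y ∈ latticeBall R, ∑ z ∈ latticeBall R, collisionTerm g x y z -
      2 * ∑ y ∈ latticeBall R, ∑ z ∈ latticeBall R, collisionTerm g z x y := by
  unfold Qres collisionTerm
  congr 1
  · exact sum_congr rfl fun y _ => sum_congr rfl fun z _ => if_congr Iff.rfl rfl rfl
  · congr 1
    exact sum_congr rfl fun y _ => sum_congr rfl fun z _ => if_congr Iff.rfl (by ring) rfl

lemma sum_mul_gain_sub_loss {α : Type*} (s : Finset α) (T : α → α → α → ℝ)
    (hT : ∀ x y z, T x y z = T x z y) (ψ : α → ℝ) :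
    ∑ x ∈ s, ψ x * (∑ y ∈ s, ∑ z ∈ s, T x y z - 2 * ∑ y ∈ s, ∑ z ∈ s, T z x y) =
      ∑ x ∈ s, ∑ y ∈ s, ∑ z ∈ s, T x y z * (ψ x - ψ y - ψ z) := by
  have hgain : ∑ x ∈ s, ψ x * ∑ y ∈ s, ∑ z ∈ s, T x y z =
      ∑ x ∈ s, ∑ y ∈ s, ∑ z ∈ s, T x y z * ψ x := by
    simp only [mul_sum]
    simp only [mul_comm (ψ _)]
  -- relabel `(z, x, y) ↦ (x, y, z)`
  have hloss : ∑ x ∈ s, ψ x * ∑ y ∈ s, ∑ z ∈ s, T z x y =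
      ∑ x ∈ s, ∑ y ∈ s, ∑ z ∈ s, T x y z * ψ y := by
    simp only [mul_sum]
    simp only [mul_comm (ψ _)]
    calc _ = ∑ x ∈ s, ∑ z ∈ s, ∑ y ∈ s, T z x y * ψ x := sum_congr rfl fun x _ => sum_comm
      _ = _ := sum_comm
  have hswap : ∑ x ∈ s, ∑ y ∈ s, ∑ z ∈ s, T x y z * ψ y =
      ∑ x ∈ s, ∑ y ∈ s, ∑ z ∈ s, T x y z * ψ z := by
    refine sum_congr rfl fun x _ => ?_
    rw [sum_comm]
    simp only [hT x]
  have hlhs : ∑ x ∈ s, ψ x * (∑ y ∈ s, ∑ z ∈ s, T x y z - 2 * ∑ y ∈ s, ∑ z ∈ s, T z x y) =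
      ∑ x ∈ s, ψ x * ∑ y ∈ s, ∑ z ∈ s, T x y z -
        2 * ∑ x ∈ s, ψ x * ∑ y ∈ s, ∑ z ∈ s, T z x y := by
    rw [mul_sum, ← sum_sub_distrib]
    exact sum_congr rfl fun x _ => by ring
  rw [hlhs, hgain, hloss]
  simp only [mul_sub, sum_sub_distrib]
  rw [hswap]
  ring

end Collisions

section RayBalance

open Finset

lemma sum_mul_Qres (R : ℝ) (g ψ : (Fin 3 → ℤ) → ℝ) :
    ∑ x ∈ latticeBall R, ψ x * Qres R g x =
      ∑ x ∈ latticeBall R, ∑ y ∈ latticeBall R, ∑ z ∈ latticeBall R,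
        collisionTerm g x y z * (ψ x - ψ y - ψ z) := by
  simp only [Qres_eq_sum_collisionTerm]
  exact sum_mul_gain_sub_loss _ _ (collisionTerm_comm g) ψ

lemma IsResonant.ite_primPart_sub {x y z : Fin 3 → ℤ} (h : IsResonant x y z) (hy : y ≠ 0)
    (hz : z ≠ 0) (P : Fin 3 → ℤ) (φ : (Fin 3 → ℤ) → ℝ) :
    ((if primPart x = P then φ x else 0) - (if primPart y = P then φ y else 0) -
      (if primPart z = P then φ z else 0)) = if primPart x = P then φ x - φ y - φ z else 0 := by
  obtain ⟨hyx, hzx, -⟩ := h.primPart_eq hy hz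
  rw [hyx, hzx]
  split_ifs <;> ring

lemma sum_ray_mul_Qres {R : ℝ} {P : Fin 3 → ℤ} (hP : content P = 1) (g φ : (Fin 3 → ℤ) → ℝ) :
    ∑ m ∈ Icc 1 (rayLength R P), φ ((m : ℤ) • P) * Qres R g ((m : ℤ) • P) =
      ∑ x ∈ latticeBall R, ∑ y ∈ latticeBall R, ∑ z ∈ latticeBall R,
        collisionTerm g x y z * (if primPart x = P then φ x - φ y - φ z else 0) := by
  rw [← sum_ite_primPart_eq hP fun p => φ p * Qres R g p]
  simp only [← ite_zero_mul, sum_mul_Qres]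
  refine sum_congr rfl fun x _ => sum_congr rfl fun y hy => sum_congr rfl fun z hz => ?_
  by_cases h : IsResonant x y z
  · rw [h.ite_primPart_sub (ne_zero_of_mem_latticeBall hy) (ne_zero_of_mem_latticeBall hz)]
  · simp [collisionTerm, h]

lemma sum_natCast_mul_Qres_eq_zero {R : ℝ} {P : Fin 3 → ℤ} (hP : content P = 1)
    (g : (Fin 3 → ℤ) → ℝ) :
    ∑ m ∈ Icc 1 (rayLength R P), (m : ℝ) * Qres R g ((m : ℤ) • P) = 0 := by
  calc _ = ∑ m ∈ Icc 1 (rayLength R P), (content ((m : ℤ) • P) : ℝ) * Qres R g ((m : ℤ) • P) :=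
        sum_congr rfl fun m _ => by rw [content_natCast_smul, hP, mul_one]
    _ = _ := sum_ray_mul_Qres hP g fun p => (content p : ℝ)
    _ = 0 := ?_
  refine sum_eq_zero fun x _ => sum_eq_zero fun y hy => sum_eq_zero fun z hz => ?_
  by_cases h : IsResonant x y z
  · rw [(h.primPart_eq (ne_zero_of_mem_latticeBall hy) (ne_zero_of_mem_latticeBall hz)).2.2]
    simp
  · simp [collisionTerm, h]

lemma collisionTerm_mul_neg_inv {g : (Fin 3 → ℤ) → ℝ} {x y z : Fin 3 → ℤ} (h : IsResonant x y z)
    (hx : g x ≠ 0) (hy : g y ≠ 0) (hz : g z ≠ 0) :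
    collisionTerm g x y z * (-(1 / g x) - -(1 / g y) - -(1 / g z)) =
      -(enorm3 x * enorm3 y * enorm3 z * (g x * g y * g z) *
        (1 / g x - 1 / g y - 1 / g z) ^ 2) := by
  rw [collisionTerm, if_pos h]
  field_simp
  ring

lemma isResonant_natCast_smul (P : Fin 3 → ℤ) (a b : ℕ) :
    IsResonant (((a + b : ℕ) : ℤ) • P) ((a : ℤ) • P) ((b : ℤ) • P) := by
  refine ⟨by rw [Nat.cast_add, add_smul], ?_⟩
  simp only [enorm3_smul, Int.cast_natCast (R := ℝ), Nat.abs_cast]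
  push_cast
  ring

lemma collisionTerm_mul_ite_neg_inv_nonpos {R : ℝ} {g : (Fin 3 → ℤ) → ℝ}
    (hg : ∀ p ∈ latticeBall R, 0 < g p) (P : Fin 3 → ℤ) {x y z : Fin 3 → ℤ}
    (hx : x ∈ latticeBall R) (hy : y ∈ latticeBall R) (hz : z ∈ latticeBall R) :
    collisionTerm g x y z *
      (if primPart x = P then -(1 / g x) - -(1 / g y) - -(1 / g z) else 0) ≤ 0 := by
  by_cases h : IsResonant x y z
  · split_ifs
    · rw [collisionTerm_mul_neg_inv h (hg x hx).ne' (hg y hy).ne' (hg z hz).ne', neg_nonpos]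
      have := hg x hx; have := hg y hy; have := hg z hz
      have := enorm3_pos (ne_zero_of_mem_latticeBall hx)
      have := enorm3_pos (ne_zero_of_mem_latticeBall hy)
      have := enorm3_pos (ne_zero_of_mem_latticeBall hz)
      positivity
    · rw [mul_zero]
  · simp [collisionTerm, h]

lemma collisionTerm_smul_mul_neg_inv_le {P : Fin 3 → ℤ} (hP : content P = 1)
    {g : (Fin 3 → ℤ) → ℝ} {j : ℕ} (hj : 1 ≤ j) (ha : 0 < g (((j + 1 : ℕ) : ℤ) • P))
    (hb : 0 < g ((j : ℤ) • P)) (hc : 0 < g (((1 : ℕ) : ℤ) • P)) :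
    collisionTerm g (((j + 1 : ℕ) : ℤ) • P) ((j : ℤ) • P) (((1 : ℕ) : ℤ) • P) *
        (-(1 / g (((j + 1 : ℕ) : ℤ) • P)) - -(1 / g ((j : ℤ) • P)) -
          -(1 / g (((1 : ℕ) : ℤ) • P))) ≤
      -enorm3 P ^ 3 * (g (((j + 1 : ℕ) : ℤ) • P) * g ((j : ℤ) • P) * g (((1 : ℕ) : ℤ) • P) *
        rayDefect (fun m => g ((m : ℤ) • P)) j ^ 2) := by
  rw [collisionTerm_mul_neg_inv (isResonant_natCast_smul P j 1) ha.ne' hb.ne' hc.ne']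
  simp only [enorm3_smul, Int.cast_natCast, Nat.abs_cast]
  set X := enorm3 P ^ 3 *
    (g (((j + 1 : ℕ) : ℤ) • P) * g ((j : ℤ) • P) * g (((1 : ℕ) : ℤ) • P)) *
    rayDefect (fun m => g ((m : ℤ) • P)) j ^ 2
  have hX : 0 ≤ X := by have := enorm3_pos (ne_zero_of_content_eq_one hP); positivity
  have hjj : (1 : ℝ) ≤ ((j + 1 : ℕ) : ℝ) * j := by
    have : (1 : ℝ) ≤ j := by exact_mod_cast hj
    push_cast; nlinarith
  calc _ = -(((j + 1 : ℕ) : ℝ) * j * X) := by simp only [X, rayDefect]; push_cast; ring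
    _ ≤ -X := by nlinarith
    _ = _ := by simp only [X]; ring

/-- Every resonant collision produces entropy, so the collisions `(j + 1) P ⇄ j P + P` alone
bound the production from below. -/
lemma sum_neg_inv_mul_Qres_le {R : ℝ} {P : Fin 3 → ℤ} (hP : content P = 1)
    (g : (Fin 3 → ℤ) → ℝ) (hg : ∀ p ∈ latticeBall R, 0 < g p) :
    ∑ m ∈ Icc 1 (rayLength R P), -(1 / g ((m : ℤ) • P)) * Qres R g ((m : ℤ) • P) ≤
      -enorm3 P ^ 3 * rayDissipation (rayLength R P) fun m => g ((m : ℤ) • P) := by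
  set N := rayLength R P
  set F : (Fin 3 → ℤ) → (Fin 3 → ℤ) → (Fin 3 → ℤ) → ℝ := fun x y z =>
    collisionTerm g x y z * (if primPart x = P then -(1 / g x) - -(1 / g y) - -(1 / g z) else 0)
  set τ : ℕ → (Fin 3 → ℤ) × (Fin 3 → ℤ) × (Fin 3 → ℤ) := fun j =>
    (((j + 1 : ℕ) : ℤ) • P, (j : ℤ) • P, ((1 : ℕ) : ℤ) • P)
  have hmem : ∀ {m : ℕ}, 1 ≤ m → m ≤ N → (m : ℤ) • P ∈ latticeBall R := fun h1 h2 =>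
    (natCast_smul_mem_latticeBall (ne_zero_of_content_eq_one hP)).mpr (mem_Icc.mpr ⟨h1, h2⟩)
  have hτ : (Icc 1 (N - 1)).image τ ⊆ latticeBall R ×ˢ latticeBall R ×ˢ latticeBall R := by
    simp only [subset_iff, mem_image, mem_Icc, mem_product]
    rintro _ ⟨j, ⟨hj1, hjN⟩, rfl⟩
    exact ⟨hmem (by omega) (by omega), hmem hj1 (by omega), hmem le_rfl (by omega)⟩
  have hτinj : Set.InjOn τ (Icc 1 (N - 1)) := fun a _ b _ hab => by
    have := (eq_of_smul_eq_smul hP hP (by positivity) (by positivity) (congrArg Prod.fst hab)).1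
    exact_mod_cast Nat.succ_injective (by exact_mod_cast this)
  calc _ = ∑ q ∈ latticeBall R ×ˢ latticeBall R ×ˢ latticeBall R, F q.1 q.2.1 q.2.2 := by
        rw [sum_ray_mul_Qres hP g fun p => -(1 / g p)]
        simp only [sum_product, F]
    _ ≤ ∑ q ∈ (Icc 1 (N - 1)).image τ, F q.1 q.2.1 q.2.2 := by
        -- all the terms left out are nonpositive
        have := sum_le_sum_of_subset_of_nonneg (f := fun q => -F q.1 q.2.1 q.2.2) hτ
          fun q hq _ => by
            simp only [mem_product] at hq
            exact neg_nonneg.mpr (collisionTerm_mul_ite_neg_inv_nonpos hg P hq.1 hq.2.1 hq.2.2)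
        simpa only [sum_neg_distrib, neg_le_neg_iff] using this
    _ = ∑ j ∈ Icc 1 (N - 1), F (τ j).1 (τ j).2.1 (τ j).2.2 := sum_image hτinj
    _ ≤ _ := by
      rw [rayDissipation, mul_sum]
      refine sum_le_sum fun j hj => ?_
      obtain ⟨hj1, hjN⟩ := mem_Icc.mp hj
      simp only [F, τ]
      rw [if_pos (primPart_smul hP (Nat.succ_pos j))]
      exact collisionTerm_smul_mul_neg_inv_le hP hj1 (hg _ (hmem (by omega) (by omega)))
        (hg _ (hmem hj1 (by omega))) (hg _ (hmem le_rfl (by omega)))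

end RayBalance

section Equilibrium

open Finset

/-- `ρ(P)`: the equilibrium `1 / (m ρ(P))` on the ray of `P` has the energy of `f₀` there. -/
noncomputable def equilibriumSlope (R : ℝ) (f₀ : (Fin 3 → ℤ) → ℝ) (P : Fin 3 → ℤ) : ℝ :=
  rayLength R P / rayEnergy (rayLength R P) fun m => f₀ ((m : ℤ) • P)

noncomputable def equilibrium (R : ℝ) (f₀ : (Fin 3 → ℤ) → ℝ) (p : Fin 3 → ℤ) : ℝ :=
  1 / (content p * equilibriumSlope R f₀ (primPart p))

variable {R : ℝ} {f₀ : (Fin 3 → ℤ) → ℝ}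

lemma equilibriumSlope_pos (hf₀ : ∀ p ∈ latticeBall R, 0 < f₀ p) {p : Fin 3 → ℤ}
    (hp : p ∈ latticeBall R) : 0 < equilibriumSlope R f₀ (primPart p) := by
  have hP0 := ne_zero_of_content_eq_one (content_primPart (ne_zero_of_mem_latticeBall hp))
  have hN : 1 ≤ rayLength R (primPart p) := (mem_Icc.mp (content_mem_Icc_rayLength hp)).1.trans
    (mem_Icc.mp (content_mem_Icc_rayLength hp)).2
  have hN' : (0 : ℝ) < rayLength R (primPart p) := by exact_mod_cast hN
  exact div_pos hN' (rayEnergy_pos hN fun m hm => hf₀ _ ((natCast_smul_mem_latticeBall hP0).mpr hm))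

lemma equilibrium_pos (hf₀ : ∀ p ∈ latticeBall R, 0 < f₀ p) {p : Fin 3 → ℤ}
    (hp : p ∈ latticeBall R) : 0 < equilibrium R f₀ p := by
  have := content_pos (ne_zero_of_mem_latticeBall hp)
  have := equilibriumSlope_pos hf₀ hp
  unfold equilibrium
  positivity

lemma equilibrium_natCast_smul {P : Fin 3 → ℤ} (hP : content P = 1) {m : ℕ} (hm : 0 < m) :
    equilibrium R f₀ ((m : ℤ) • P) =
      rayEquilibrium (rayLength R P) (rayEnergy (rayLength R P) fun k => f₀ ((k : ℤ) • P)) m := by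
  rw [equilibrium, equilibriumSlope, rayEquilibrium, primPart_smul hP hm, content_natCast_smul, hP,
    mul_one]
  rw [one_div, mul_inv, inv_div]
  ring

/-- `1 / f*` is additive along rays, which makes every resonant collision balanced. -/
lemma Qres_equilibrium_eq_zero {p : Fin 3 → ℤ} (hp : p ∈ latticeBall R) :
    Qres R (equilibrium R f₀) p = 0 := by
  suffices h : ∀ x, ∀ y ∈ latticeBall R, ∀ z ∈ latticeBall R,
      collisionTerm (equilibrium R f₀) x y z = 0 by
    rw [Qres_eq_sum_collisionTerm, sum_eq_zero fun y hy => sum_eq_zero fun z hz => h p y hy z hz,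
      sum_eq_zero fun y hy => sum_eq_zero fun z hz => h z p hp y hy, mul_zero, sub_zero]
  intro x y hy z hz
  by_cases hres : IsResonant x y z
  · obtain ⟨hyx, hzx, hxyz⟩ :=
      hres.primPart_eq (ne_zero_of_mem_latticeBall hy) (ne_zero_of_mem_latticeBall hz)
    have ha : (0 : ℝ) < content y := by exact_mod_cast content_pos (ne_zero_of_mem_latticeBall hy)
    have hb : (0 : ℝ) < content z := by exact_mod_cast content_pos (ne_zero_of_mem_latticeBall hz)
    rw [collisionTerm, if_pos hres, equilibrium, equilibrium, equilibrium, hyx, hzx, hxyz,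
      Nat.cast_add]
    set ρ := equilibriumSlope R f₀ (primPart x)
    rcases eq_or_ne ρ 0 with hρ | hρ
    · simp [hρ]
    · field_simp
      ring
  · simp [collisionTerm, hres]

end Equilibrium

section Convergence

open Finset

variable {R : ℝ} {f : ℝ → (Fin 3 → ℤ) → ℝ}

lemma isDissipativeRayFlow
    (hsol : ∀ p ∈ latticeBall R, ∀ t : ℝ, 0 ≤ t → HasDerivAt (fun s => f s p) (Qres R (f t) p) t)
    (hpos : ∀ p ∈ latticeBall R, ∀ t : ℝ, 0 ≤ t → 0 < f t p) {P : Fin 3 → ℤ} (hP : content P = 1) :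
    IsDissipativeRayFlow (rayLength R P) (enorm3 P ^ 3) (fun t m => f t ((m : ℤ) • P))
      (fun t m => Qres R (f t) ((m : ℤ) • P)) where
  pos t ht _ hm :=
    hpos _ ((natCast_smul_mem_latticeBall (ne_zero_of_content_eq_one hP)).mpr hm) t ht
  hasDerivAt t ht _ hm :=
    hsol _ ((natCast_smul_mem_latticeBall (ne_zero_of_content_eq_one hP)).mpr hm) t ht
  energy t _ := sum_natCast_mul_Qres_eq_zero hP (f t)
  entropy t ht := sum_neg_inv_mul_Qres_le hP (f t) fun p hp => hpos p hp t ht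

lemma exists_abs_sub_equilibrium_le_exp
    (hsol : ∀ p ∈ latticeBall R, ∀ t : ℝ, 0 ≤ t → HasDerivAt (fun s => f s p) (Qres R (f t) p) t)
    (hpos : ∀ p ∈ latticeBall R, ∀ t : ℝ, 0 ≤ t → 0 < f t p) {p : Fin 3 → ℤ}
    (hp : p ∈ latticeBall R) : ∃ C₁ > 0, ∃ C₂ > 0, ∀ t, 0 ≤ t →
      |f t p - equilibrium R (f 0) p| ≤ C₁ * Real.exp (-C₂ * t) := by
  have hP := content_primPart (ne_zero_of_mem_latticeBall hp)
  have hm := content_mem_Icc_rayLength hp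
  obtain ⟨C₁, hC₁, C₂, hC₂, hbound⟩ :=
    (isDissipativeRayFlow hsol hpos hP).exists_abs_sub_rayEquilibrium_le_exp
      ((mem_Icc.mp hm).1.trans (mem_Icc.mp hm).2)
      (pow_pos (enorm3_pos (ne_zero_of_content_eq_one hP)) 3)
  refine ⟨C₁, hC₁, C₂, hC₂, fun t ht => ?_⟩
  have := hbound t ht _ hm
  rwa [← equilibrium_natCast_smul hP (mem_Icc.mp hm).1, content_smul_primPart] at this

end Convergence

theorem convergence_to_equilibrium_near_resonance_general (R : ℝ) (Λstar : ℝ)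
    (hmin : IsLeast {x : ℝ | ∃ p1 ∈ latticeBall R, ∃ p2 ∈ latticeBall R,
      ∃ p3 ∈ latticeBall R, p1 = p2 + p3 ∧ enorm3 p1 ≠ enorm3 p2 + enorm3 p3 ∧
        x = |enorm3 p1 - enorm3 p2 - enorm3 p3|} Λstar)
    (Λ : ℝ) (hΛ0 : 0 ≤ Λ) (hΛ : Λ < Λstar)
    (f : ℝ → (Fin 3 → ℤ) → ℝ)
    (hsol : ∀ p ∈ latticeBall R, ∀ t : ℝ, 0 ≤ t →
      HasDerivAt (fun s => f s p) (QNR R Λ (f t) p) t)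
    (hpos : ∀ p ∈ latticeBall R, ∀ t : ℝ, 0 ≤ t → 0 < f t p) :
    ∃ (fstar : (Fin 3 → ℤ) → ℝ) (ρ : (Fin 3 → ℤ) → ℝ),
      (∀ p ∈ latticeBall R, 0 < fstar p) ∧
      (∀ p ∈ latticeBall R, QNR R Λ fstar p = 0) ∧
      (∀ p ∈ latticeBall R, ∀ (P : Fin 3 → ℤ) (k : ℕ), 0 < k → p = (k : ℤ) • P →
        OnRay p P → (∀ Q : Fin 3 → ℤ, OnRay p Q → enorm3 P ≤ enorm3 Q) →
        0 < ρ P ∧ fstar p = 1 / ((k : ℝ) * ρ P)) ∧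
      ∃ C1 C2 : ℝ, 0 < C1 ∧ 0 < C2 ∧
        ∀ t : ℝ, 0 ≤ t → ∀ p ∈ latticeBall R,
          |f t p - fstar p| ≤ C1 * Real.exp (-C2 * t) := by
  have hQNR : ∀ g, ∀ p ∈ latticeBall R, QNR R Λ g p = Qres R g p := fun g p hp =>
    QNR_eq_Qres hΛ0 (fun x hx y hy z hz hs hne =>
      hΛ.trans_le (hmin.2 ⟨x, hx, y, hy, z, hz, hs, hne, rfl⟩)) g hp
  have hres : ∀ p ∈ latticeBall R, ∀ t : ℝ, 0 ≤ t →
      HasDerivAt (fun s => f s p) (Qres R (f t) p) t := fun p hp t ht =>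
    hQNR (f t) p hp ▸ hsol p hp t ht
  have hpos₀ : ∀ p ∈ latticeBall R, 0 < f 0 p := fun p hp => hpos p hp 0 le_rfl
  refine ⟨equilibrium R (f 0), equilibriumSlope R (f 0), fun p hp => equilibrium_pos hpos₀ hp,
    fun p hp => (hQNR _ p hp).trans (Qres_equilibrium_eq_zero hp), ?_, ?_⟩
  · intro p hp P k hk hpk hray hminimal
    have hP : P = primPart p :=
      eq_primPart_of_onRay_of_minimal (ne_zero_of_mem_latticeBall hp) hray hminimal
    have hP1 : content P = 1 := hP ▸ content_primPart (ne_zero_of_mem_latticeBall hp)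
    refine ⟨hP ▸ equilibriumSlope_pos hpos₀ hp, ?_⟩
    rw [equilibrium, hpk, primPart_smul hP1 hk, content_natCast_smul, hP1, mul_one]
  · obtain ⟨C₁, hC₁, C₂, hC₂, hbound⟩ := exists_exp_bound_of_forall_mem (latticeBall R)
      (fun p t => |f t p - equilibrium R (f 0) p|)
      fun p hp => exists_abs_sub_equilibrium_le_exp hres hpos hp
    exact ⟨C₁, C₂, hC₁, hC₂, fun t ht p hp => hbound p hp t ht⟩

/-- Convergence to equilibrium for the discrete near-resonance acoustic kinetic system
with broadening below the threshold `Λ_*`: every positive solution converges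
exponentially fast to an equilibrium `f*` which, along each ray `{kP}` (with `P` the
lattice point of minimal norm on the ray), has the form `f*_{kP} = 1/(k ρ(P))`. -/
theorem convergence_to_equilibrium_near_resonance (R : ℝ) (hR : 0 < R) (Λstar : ℝ)
    (hmin : IsLeast {x : ℝ | ∃ p1 ∈ latticeBall R, ∃ p2 ∈ latticeBall R,
      ∃ p3 ∈ latticeBall R, p1 = p2 + p3 ∧ enorm3 p1 ≠ enorm3 p2 + enorm3 p3 ∧
        x = |enorm3 p1 - enorm3 p2 - enorm3 p3|} Λstar)
    (Λ : ℝ) (hΛ0 : 0 ≤ Λ) (hΛ : Λ < Λstar)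
    (f : ℝ → (Fin 3 → ℤ) → ℝ)
    (hsol : ∀ p ∈ latticeBall R, ∀ t : ℝ, 0 ≤ t →
      HasDerivAt (fun s => f s p) (QNR R Λ (f t) p) t)
    (hpos : ∀ p ∈ latticeBall R, ∀ t : ℝ, 0 ≤ t → 0 < f t p) :
    ∃ (fstar : (Fin 3 → ℤ) → ℝ) (ρ : (Fin 3 → ℤ) → ℝ),
      (∀ p ∈ latticeBall R, 0 < fstar p) ∧
      (∀ p ∈ latticeBall R, QNR R Λ fstar p = 0) ∧
      (∀ p ∈ latticeBall R, ∀ (P : Fin 3 → ℤ) (k : ℕ), 0 < k → p = (k : ℤ) • P →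
        OnRay p P → (∀ Q : Fin 3 → ℤ, OnRay p Q → enorm3 P ≤ enorm3 Q) →
        0 < ρ P ∧ fstar p = 1 / ((k : ℝ) * ρ P)) ∧
      ∃ C1 C2 : ℝ, 0 < C1 ∧ 0 < C2 ∧
        ∀ t : ℝ, 0 ≤ t → ∀ p ∈ latticeBall R,
          |f t p - fstar p| ≤ C1 * Real.exp (-C2 * t) :=
  convergence_to_equilibrium_near_resonance_general R Λstar hmin Λ hΛ0 hΛ f hsol hpos
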